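/- arXiv:1402.3383 — 3 statements merged into one kernel-verified Lean document; each statement's English description precedes it below -/
import Mathlib

section
/- (Combinatorial Nullstellensatz, ANR form) Let A_1, ..., A_n be nonempty finite subsets of a field F and P ∈ F[x_1,...,x_n] a nonzero polynomial with deg P ≤ Σ_j(|A_j| − 1). If the coefficient of x_1^{|A_1|−1}···x_n^{|A_n|−1} in P(x_1,...,x_n)·(x_1 + ... + x_n)^{Σ_j(|A_j|−1) − deg P} is nonzero, then |{a_1 + ... + a_n : a_j ∈ A_j, P(a_1,...,a_n) ≠ 0}| ≥ Σ_j(|A_j| − 1) − deg P + 1. -/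
/-!
Let `D = ∑ (|Aⱼ| - 1)`, `m = D - deg P`, `L = x₁ + ⋯ + xₙ`, and let `S` be the set of sums
`a₁ + ⋯ + aₙ` over grid points where `P` does not vanish. If `|S| ≤ m`, the polynomial
`Q = P · L^(m - |S|) · ∏_{c ∈ S} (L - c)` vanishes on the whole grid `A₁ × ⋯ × Aₙ`, has degree
at most `D`, and agrees with `P · L^m` in degree `D`, because subtracting the constants `c` only
changes lower-degree terms. So `Q` has the nonzero coefficient of `x₁^(|A₁|-1)⋯xₙ^(|Aₙ|-1)` in
top degree, and Alon's Combinatorial Nullstellensatz yields a grid point where `Q ≠ 0`.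
-/

open Finset MvPolynomial

namespace MvPolynomial

variable {σ R : Type*} [CommRing R]

theorem totalDegree_sum_X_le_one [Fintype σ] :
    (∑ i : σ, (X i : MvPolynomial σ R)).totalDegree ≤ 1 := by
  cases subsingleton_or_nontrivial R
  · simp [Subsingleton.elim (∑ i : σ, (X i : MvPolynomial σ R)) 0]
  exact (totalDegree_finsetSum _ _).trans (Finset.sup_le fun i _ => (totalDegree_X i).le)

theorem coeff_mul_sub_C_of_totalDegree_lt {p : MvPolynomial σ R} {t : σ →₀ ℕ}
    (hp : p.totalDegree < t.degree) (q : MvPolynomial σ R) (c : R) :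
    coeff t (p * (q - C c)) = coeff t (p * q) := by
  rw [mul_sub, coeff_sub, mul_comm p (C c), coeff_C_mul,
    coeff_eq_zero_of_totalDegree_lt hp, mul_zero, sub_zero]

theorem totalDegree_prod_sub_C_le (L : MvPolynomial σ R) (s : Finset R) :
    (∏ c ∈ s, (L - C c)).totalDegree ≤ #s * L.totalDegree :=
  (totalDegree_finsetProd _ _).trans
    (sum_le_card_nsmul _ _ _ fun c _ => totalDegree_sub_C_le L c)

theorem coeff_mul_prod_sub_C_eq_coeff_mul_pow {L : MvPolynomial σ R} (hL : L.totalDegree ≤ 1)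
    {t : σ →₀ ℕ} (s : Finset R) (p : MvPolynomial σ R)
    (hp : p.totalDegree + #s ≤ t.degree) :
    coeff t (p * ∏ c ∈ s, (L - C c)) = coeff t (p * L ^ #s) := by
  classical
  induction s using Finset.induction_on generalizing p with
  | empty => simp
  | @insert a s ha ih =>
    rw [card_insert_of_notMem ha] at hp ⊢
    have hpL : (p * (L - C a)).totalDegree + #s ≤ t.degree := by
      grw [totalDegree_mul, totalDegree_sub_C_le, hL]
      omega
    have hpLs : (p * L ^ #s).totalDegree < t.degree := by
      grw [totalDegree_mul, totalDegree_pow, hL]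
      omega
    rw [prod_insert ha, ← mul_assoc, ih _ hpL, mul_right_comm,
      coeff_mul_sub_C_of_totalDegree_lt hpLs, pow_succ, mul_assoc]

end MvPolynomial

theorem anr_polynomial_lemma_general {F : Type*} [Field F] [DecidableEq F] {n : ℕ}
    (A : Fin n → Finset F) (hA : ∀ j, (A j).Nonempty)
    (P : MvPolynomial (Fin n) F)
    (hdeg : P.totalDegree ≤ ∑ j, ((A j).card - 1))
    (hcoeff : MvPolynomial.coeff (Finsupp.equivFunOnFinite.symm fun j => (A j).card - 1)
        (P * (∑ j, X j) ^ ((∑ j, ((A j).card - 1)) - P.totalDegree)) ≠ 0) :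
    (∑ j, ((A j).card - 1)) - P.totalDegree + 1 ≤
      (((Fintype.piFinset A).filter fun f => MvPolynomial.eval f P ≠ 0).image
        fun f => ∑ i, f i).card := by
  set D := ∑ j, ((A j).card - 1)
  set t : Fin n →₀ ℕ := Finsupp.equivFunOnFinite.symm fun j => (A j).card - 1
  set L : MvPolynomial (Fin n) F := ∑ j, X j
  set S := ((Fintype.piFinset A).filter fun f => eval f P ≠ 0).image fun f => ∑ i, f i
  by_contra! hS
  have htD : t.degree = D := Finsupp.degree_eq_sum t
  have hL : L.totalDegree ≤ 1 := totalDegree_sum_X_le_one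
  set Q := P * L ^ (D - P.totalDegree - #S) * ∏ c ∈ S, (L - C c)
  have hQt : coeff t Q = coeff t (P * L ^ (D - P.totalDegree)) := by
    rw [coeff_mul_prod_sub_C_eq_coeff_mul_pow hL, mul_assoc, ← pow_add, Nat.sub_add_cancel]
    · omega
    · grw [totalDegree_mul, totalDegree_pow, hL]
      omega
  have hQdeg : Q.totalDegree = t.degree := by
    refine le_antisymm ?_ (le_totalDegree (mem_support_iff.2 (hQt ▸ hcoeff)))
    grw [totalDegree_mul, totalDegree_mul, totalDegree_pow, totalDegree_prod_sub_C_le, hL]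
    omega
  obtain ⟨x, hxA, hxQ⟩ := combinatorial_nullstellensatz_exists_eval_nonzero Q t
    (hQt ▸ hcoeff) hQdeg A fun j => Nat.sub_lt (card_pos.2 (hA j)) one_pos
  have hxS : ∑ i, x i ∈ S :=
    mem_image.2 ⟨x, mem_filter.2 ⟨Fintype.mem_piFinset.2 hxA,
      fun h => hxQ (by simp [Q, h])⟩, rfl⟩
  exact hxQ (by simp [Q, L, prod_eq_zero hxS])

/-- Combinatorial Nullstellensatz in the Alon–Nathanson–Ruzsa form. -/
theorem anr_polynomial_lemma {F : Type*} [Field F] [DecidableEq F] {n : ℕ}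
    (A : Fin n → Finset F) (hA : ∀ j, (A j).Nonempty)
    (P : MvPolynomial (Fin n) F) (hP : P ≠ 0)
    (hdeg : P.totalDegree ≤ ∑ j, ((A j).card - 1))
    (hcoeff : MvPolynomial.coeff (Finsupp.equivFunOnFinite.symm fun j => (A j).card - 1)
        (P * (∑ j, X j) ^ ((∑ j, ((A j).card - 1)) - P.totalDegree)) ≠ 0) :
    (∑ j, ((A j).card - 1)) - P.totalDegree + 1 ≤
      (((Fintype.piFinset A).filter fun f => MvPolynomial.eval f P ≠ 0).image
        fun f => ∑ i, f i).card :=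
  anr_polynomial_lemma_general A hA P hdeg hcoeff
end

section
/- (Dyson's constant term conjecture) For nonnegative integers a_0, a_1, ..., a_n, the constant term of the Laurent polynomial ∏_{0≤i≠j≤n}(1 − x_i/x_j)^{a_j} equals the multinomial coefficient (a_0 + a_1 + ... + a_n)!/(a_0!·a_1!···a_n!). -/
open Finset

/-- Multivariate Laurent monomial `x^v` in the group algebra `ℚ[ℤ^N]`. -/
noncomputable def laurentMonomial {N : ℕ} (v : Fin N → ℤ) :
    AddMonoidAlgebra ℚ (Fin N →₀ ℤ) :=
  AddMonoidAlgebra.single (Finsupp.equivFunOnFinite.symm v) 1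

/-- The constant term of a Laurent polynomial in `N` variables. -/
noncomputable def constantTerm {N : ℕ} (f : AddMonoidAlgebra ℚ (Fin N →₀ ℤ)) : ℚ :=
  (f.coeff : (Fin N →₀ ℤ) →₀ ℚ) 0

/-!
Good's proof. Write the product over `s` as `F_s(a) = ∏_{m ∈ s} P_m ^ a_m` with
`P_m = ∏_{i ∈ s, i ≠ m} (1 - x_i/x_m)`. Lagrange interpolation of `X ^ (|s| - 1)` at the nodes
`x_k` gives `∑_k P_k⁻¹ = 1` in the fraction field, hence `F_s(a) = ∑_k F_s(a - e_k)` when all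
`a_k ≥ 1`: the recurrence of the multinomial coefficients. When `a_k = 0`,
`F_s(a) = F_{s ∖ k}(a) · ∏_m (1 - x_k/x_m) ^ a_m`, where the first factor does not involve
`x_k` and the second is `1` modulo `x_k`, so the constant term is that of `F_{s ∖ k}(a)`.
-/

open Polynomial in
theorem Lagrange.sum_inv_prod_one_sub_div {F ι : Type*} [Field F] [DecidableEq ι]
    {s : Finset ι} {v : ι → F} (hvs : Set.InjOn v s) (hv : ∀ i ∈ s, v i ≠ 0)
    (hs : s.Nonempty) :
    ∑ k ∈ s, (∏ i ∈ s.erase k, (1 - v i / v k))⁻¹ = 1 := by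
  have hdeg : (X ^ (#s - 1) : F[X]).degree < #s := by
    rw [degree_X_pow]; exact_mod_cast Nat.sub_lt hs.card_pos one_pos
  have hL := Lagrange.coeff_eq_sum hvs hdeg
  rw [coeff_X_pow_self] at hL
  conv_rhs => rw [hL]
  refine Finset.sum_congr rfl fun k hk => ?_
  have hfac : ∀ i ∈ s.erase k, 1 - v i / v k = (v k - v i) / v k := fun i _ => by
    field_simp [hv k hk]
  rw [Finset.prod_congr rfl hfac, Finset.prod_div_distrib, Finset.prod_const,
    Finset.card_erase_of_mem hk, inv_div, eval_pow, eval_X]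

theorem Finset.sum_update_sub_one_add_one {ι : Type*} [DecidableEq ι] {s : Finset ι}
    {a : ι → ℕ} {k : ι} (hk : k ∈ s) (hak : a k ≠ 0) :
    ∑ i ∈ s, Function.update a k (a k - 1) i + 1 = ∑ i ∈ s, a i := by
  rw [Finset.sum_update_of_mem hk, Finset.sdiff_singleton_eq_erase,
    ← Finset.add_sum_erase s a hk]
  omega

namespace Nat

theorem multinomial_erase_of_eq_zero {ι : Type*} [DecidableEq ι] {s : Finset ι} {a : ι → ℕ}
    {k : ι} (hk : k ∈ s) (hak : a k = 0) : multinomial s a = multinomial (s.erase k) a := by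
  conv_lhs => rw [← Finset.insert_erase hk]
  rw [multinomial_insert (Finset.notMem_erase k s), hak, choose_zero_right, one_mul]

theorem sum_mul_multinomial_update {ι : Type*} [DecidableEq ι] {s : Finset ι} {a : ι → ℕ}
    {k : ι} (hk : k ∈ s) (hak : a k ≠ 0) :
    (∑ i ∈ s, a i) * multinomial s (Function.update a k (a k - 1)) = a k * multinomial s a := by
  set b := Function.update a k (a k - 1) with hb
  have hfact : ∏ i ∈ s, (a i)! = a k * ∏ i ∈ s, (b i)! := by
    have hrest : ∏ i ∈ s.erase k, (b i)! = ∏ i ∈ s.erase k, (a i)! :=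
      Finset.prod_congr rfl fun i hi => by
        rw [hb, Function.update_of_ne (Finset.ne_of_mem_erase hi)]
    rw [← Finset.mul_prod_erase s _ hk, ← Finset.mul_prod_erase s (fun i => (b i)!) hk, hrest,
      hb, Function.update_self, ← mul_assoc, mul_factorial_pred hak]
  refine Nat.eq_of_mul_eq_mul_left (Finset.prod_pos (s := s) fun i _ => factorial_pos (b i)) ?_
  calc (∏ i ∈ s, (b i)!) * ((∑ i ∈ s, a i) * multinomial s b)
      = (∑ i ∈ s, b i + 1) * ((∏ i ∈ s, (b i)!) * multinomial s b) := by
        rw [Finset.sum_update_sub_one_add_one hk hak]; ring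
    _ = (∏ i ∈ s, (a i)!) * multinomial s a := by
        rw [multinomial_spec, multinomial_spec, ← factorial_succ,
          Finset.sum_update_sub_one_add_one hk hak]
    _ = (∏ i ∈ s, (b i)!) * (a k * multinomial s a) := by rw [hfact]; ring

theorem multinomial_eq_sum_update {ι : Type*} [DecidableEq ι] {s : Finset ι} (hs : s.Nonempty)
    {a : ι → ℕ} (ha : ∀ m ∈ s, a m ≠ 0) :
    multinomial s a = ∑ k ∈ s, multinomial s (Function.update a k (a k - 1)) := by
  obtain ⟨m, hm⟩ := hs
  have hpos : 0 < ∑ i ∈ s, a i :=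
    (Nat.pos_of_ne_zero (ha m hm)).trans_le (Finset.single_le_sum (fun _ _ => zero_le _) hm)
  refine Nat.eq_of_mul_eq_mul_left hpos ?_
  rw [Finset.mul_sum, Finset.sum_congr rfl fun k hk => sum_mul_multinomial_update hk (ha k hk),
    Finset.sum_mul]

end Nat

abbrev LaurentRing (N : ℕ) := AddMonoidAlgebra ℚ (Fin N →₀ ℤ)

variable {N : ℕ}

namespace LaurentRing

theorem laurentMonomial_add (v w : Fin N → ℤ) :
    laurentMonomial (v + w) = laurentMonomial v * laurentMonomial w := by
  rw [laurentMonomial, laurentMonomial, laurentMonomial, AddMonoidAlgebra.single_mul_single,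
    one_mul]
  congr 1
  ext
  simp

theorem laurentMonomial_zero : laurentMonomial (0 : Fin N → ℤ) = 1 := by
  rw [laurentMonomial, AddMonoidAlgebra.one_def]
  congr 1
  ext
  simp

theorem isUnit_laurentMonomial (v : Fin N → ℤ) : IsUnit (laurentMonomial v) :=
  .of_mul_eq_one (laurentMonomial (-v)) <| by
    rw [← laurentMonomial_add, add_neg_cancel, laurentMonomial_zero]

theorem laurentMonomial_injective : Function.Injective (laurentMonomial (N := N)) :=
  fun _ _ h => Finsupp.equivFunOnFinite.symm.injective
    (AddMonoidAlgebra.single_left_injective one_ne_zero h)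

noncomputable def var (i : Fin N) : LaurentRing N := laurentMonomial (Pi.single i 1)

theorem var_injective : Function.Injective (var (N := N)) := by
  intro i j h
  by_contra hij
  simpa [Pi.single_apply, hij] using congrFun (laurentMonomial_injective h) i

theorem laurentMonomial_single_sub_single_mul_var (i m : Fin N) :
    laurentMonomial (Pi.single i 1 - Pi.single m 1) * var m = var i := by
  rw [var, var, ← laurentMonomial_add, sub_add_cancel]

theorem constantTerm_one : constantTerm (1 : LaurentRing N) = 1 := by
  simp [constantTerm, AddMonoidAlgebra.one_def]

theorem constantTerm_add (f g : LaurentRing N) :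
    constantTerm (f + g) = constantTerm f + constantTerm g := rfl

theorem constantTerm_sum {ι : Type*} (t : Finset ι) (f : ι → LaurentRing N) :
    constantTerm (∑ i ∈ t, f i) = ∑ i ∈ t, constantTerm (f i) := by
  simp [constantTerm, AddMonoidAlgebra.coeff_sum, Finsupp.finsetSum_apply]

open AddMonoidAlgebra

/-- `f.infDegree (exponentAt k)` is the lowest power of `x_k` occurring in `f` (`⊤` if `f = 0`). -/
def exponentAt (k : Fin N) : AddHom (Fin N →₀ ℤ) (WithTop ℤ) where
  toFun v := (v k : WithTop ℤ)
  map_add' v w := by simp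

@[simp]
theorem exponentAt_apply (k : Fin N) (v : Fin N →₀ ℤ) : exponentAt k v = v k := rfl

theorem infDegree_laurentMonomial (k : Fin N) (w : Fin N → ℤ) :
    (laurentMonomial w).infDegree (exponentAt k) = w k := by
  simp [laurentMonomial, infDegree]

theorem infDegree_neg (k : Fin N) (f : LaurentRing N) :
    (-f).infDegree (exponentAt k) = f.infDegree (exponentAt k) := by
  simp [infDegree, coeff_neg]

theorem constantTerm_eq_zero_of_infDegree_pos {k : Fin N} {f : LaurentRing N}
    (hf : 0 < f.infDegree (exponentAt k)) : constantTerm f = 0 := by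
  by_contra h
  have := Finset.inf_le (f := exponentAt k) (Finsupp.mem_support_iff.mpr h)
  simp [exponentAt] at this
  exact (hf.trans_le this).false

def polynomialIn (k : Fin N) : Subring (LaurentRing N) where
  carrier := {f | 0 ≤ f.infDegree (exponentAt k)}
  mul_mem' {f g} hf hg := (add_nonneg hf hg).trans (le_infDegree_mul (exponentAt k) f g)
  one_mem' := by simp [one_def, infDegree, Finsupp.single_apply]
  add_mem' {f g} hf hg := (le_inf hf hg).trans (le_infDegree_add (exponentAt k) f g)
  zero_mem' := by simp [infDegree]
  neg_mem' {f} hf := by rwa [Set.mem_ofPred_eq, infDegree_neg]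

theorem mem_polynomialIn {k : Fin N} {f : LaurentRing N} :
    f ∈ polynomialIn k ↔ 0 ≤ f.infDegree (exponentAt k) := Iff.rfl

def oneModVar (k : Fin N) : Submonoid (LaurentRing N) where
  carrier := {g | 1 ≤ (g - 1).infDegree (exponentAt k)}
  mul_mem' {f g} hf hg := by
    have hfg : f * g - 1 = (f - 1) * (g - 1) + ((f - 1) + (g - 1)) := by ring
    rw [Set.mem_ofPred_eq, hfg]
    refine le_trans ?_ (le_infDegree_add _ _ _)
    refine le_inf (le_trans ?_ (le_infDegree_mul _ _ _))
      (le_trans (le_inf hf hg) (le_infDegree_add _ _ _))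
    exact le_add_of_nonneg_of_le (zero_le_one.trans hf) hg
  one_mem' := by simp [infDegree]

theorem mem_oneModVar {k : Fin N} {g : LaurentRing N} :
    g ∈ oneModVar k ↔ 1 ≤ (g - 1).infDegree (exponentAt k) := Iff.rfl

theorem laurentMonomial_mem_polynomialIn {k : Fin N} {w : Fin N → ℤ} (hw : 0 ≤ w k) :
    laurentMonomial w ∈ polynomialIn k := by
  rw [mem_polynomialIn, infDegree_laurentMonomial]
  exact_mod_cast hw

theorem one_sub_laurentMonomial_mem_oneModVar {k : Fin N} {w : Fin N → ℤ} (hw : 1 ≤ w k) :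
    1 - laurentMonomial w ∈ oneModVar k := by
  rw [mem_oneModVar, sub_sub_cancel_left, infDegree_neg, infDegree_laurentMonomial]
  exact_mod_cast hw

theorem constantTerm_mul_of_mem {k : Fin N} {f g : LaurentRing N} (hf : f ∈ polynomialIn k)
    (hg : g ∈ oneModVar k) : constantTerm (f * g) = constantTerm f := by
  have hpos : 0 < (f * (g - 1)).infDegree (exponentAt k) :=
    calc (0 : WithTop ℤ) < 0 + 1 := by norm_num
      _ ≤ f.infDegree (exponentAt k) + (g - 1).infDegree (exponentAt k) :=
        add_le_add (mem_polynomialIn.mp hf) (mem_oneModVar.mp hg)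
      _ ≤ _ := le_infDegree_mul _ _ _
  rw [show f * g = f + f * (g - 1) by ring, constantTerm_add,
    constantTerm_eq_zero_of_infDegree_pos hpos, add_zero]

end LaurentRing

open LaurentRing

noncomputable def dysonColumn (s : Finset (Fin N)) (m : Fin N) : LaurentRing N :=
  ∏ i ∈ s.erase m, (1 - laurentMonomial (Pi.single i 1 - Pi.single m 1))

noncomputable def dysonProduct (s : Finset (Fin N)) (a : Fin N → ℕ) : LaurentRing N :=
  ∏ m ∈ s, dysonColumn s m ^ a m

theorem prod_offDiag_eq_dysonProduct (s : Finset (Fin N)) (a : Fin N → ℕ) :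
    ∏ p ∈ s.offDiag, (1 - laurentMonomial (Pi.single p.1 1 - Pi.single p.2 1)) ^ a p.2 =
      dysonProduct s a := by
  rw [Finset.prod_finset_product_right _ s (fun m => s.erase m)
    fun p => by simp only [mem_offDiag, mem_erase]; tauto]
  simp_rw [dysonProduct, dysonColumn, Finset.prod_pow]

section FractionField

local notation "K" => FractionRing (LaurentRing N)

theorem algebraMap_var_ne_zero (i : Fin N) : algebraMap (LaurentRing N) K (var i) ≠ 0 :=
  ((isUnit_laurentMonomial _).map _).ne_zero

theorem algebraMap_dysonColumn (s : Finset (Fin N)) (m : Fin N) :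
    algebraMap (LaurentRing N) K (dysonColumn s m) =
      ∏ i ∈ s.erase m, (1 - algebraMap _ K (var i) / algebraMap _ K (var m)) := by
  simp_rw [dysonColumn, map_prod, map_sub, map_one]
  refine Finset.prod_congr rfl fun i _ => congrArg (1 - ·) ?_
  rw [eq_div_iff (algebraMap_var_ne_zero m), ← map_mul,
    laurentMonomial_single_sub_single_mul_var]

theorem dysonProduct_eq_update_mul {s : Finset (Fin N)} {a : Fin N → ℕ} {k : Fin N}
    (hk : k ∈ s) (hak : a k ≠ 0) :
    dysonProduct s a = dysonProduct s (Function.update a k (a k - 1)) * dysonColumn s k := by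
  have hrest : ∏ m ∈ s.erase k, dysonColumn s m ^ Function.update a k (a k - 1) m =
      ∏ m ∈ s.erase k, dysonColumn s m ^ a m :=
    Finset.prod_congr rfl fun m hm => by rw [Function.update_of_ne (Finset.ne_of_mem_erase hm)]
  rw [dysonProduct, dysonProduct, ← Finset.mul_prod_erase s _ hk,
    ← Finset.mul_prod_erase s _ hk, Function.update_self, hrest, mul_right_comm, ← pow_succ,
    Nat.sub_add_cancel (Nat.pos_of_ne_zero hak)]

theorem dysonProduct_eq_sum_update {s : Finset (Fin N)} (hs : s.Nonempty) {a : Fin N → ℕ}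
    (ha : ∀ m ∈ s, a m ≠ 0) :
    dysonProduct s a = ∑ k ∈ s, dysonProduct s (Function.update a k (a k - 1)) := by
  apply IsFractionRing.injective (LaurentRing N) K
  set x : Fin N → K := fun i => algebraMap _ K (var i)
  have hx : Set.InjOn x s :=
    ((IsFractionRing.injective (LaurentRing N) K).comp var_injective).injOn
  have hcol : ∀ k ∈ s, algebraMap _ K (dysonColumn s k) ≠ 0 := fun k hk => by
    rw [algebraMap_dysonColumn, Finset.prod_ne_zero_iff]
    intro i hi
    rw [sub_ne_zero, ne_comm, ne_eq, div_eq_one_iff_eq (algebraMap_var_ne_zero k)]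
    exact fun h => (Finset.mem_erase.mp hi).1 (hx (Finset.mem_of_mem_erase hi) hk h)
  have hterm : ∀ k ∈ s, algebraMap _ K (dysonProduct s (Function.update a k (a k - 1))) =
      algebraMap _ K (dysonProduct s a) * (algebraMap _ K (dysonColumn s k))⁻¹ := fun k hk => by
    rw [dysonProduct_eq_update_mul hk (ha k hk), map_mul, mul_inv_cancel_right₀ (hcol k hk)]
  rw [map_sum, Finset.sum_congr rfl hterm, ← Finset.mul_sum]
  simp_rw [algebraMap_dysonColumn]
  rw [Lagrange.sum_inv_prod_one_sub_div hx (fun i _ => algebraMap_var_ne_zero i) hs, mul_one]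

end FractionField

theorem dysonProduct_eq_erase_mul {s : Finset (Fin N)} {a : Fin N → ℕ} {k : Fin N}
    (hk : k ∈ s) (hak : a k = 0) :
    dysonProduct s a = dysonProduct (s.erase k) a *
      ∏ m ∈ s.erase k, (1 - laurentMonomial (Pi.single k 1 - Pi.single m 1)) ^ a m := by
  have hcol : ∀ m ∈ s.erase k, dysonColumn s m =
      (1 - laurentMonomial (Pi.single k 1 - Pi.single m 1)) * dysonColumn (s.erase k) m := by
    intro m hm
    have hkm : k ∈ s.erase m := Finset.mem_erase.mpr ⟨(Finset.ne_of_mem_erase hm).symm, hk⟩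
    rw [dysonColumn, dysonColumn, ← Finset.mul_prod_erase _ _ hkm, Finset.erase_right_comm]
  rw [dysonProduct, ← Finset.mul_prod_erase s _ hk, hak, pow_zero, one_mul,
    Finset.prod_congr rfl fun m hm => by rw [hcol m hm, mul_pow], Finset.prod_mul_distrib,
    dysonProduct, mul_comm]

theorem constantTerm_dysonProduct_of_eq_zero {s : Finset (Fin N)} {a : Fin N → ℕ} {k : Fin N}
    (hk : k ∈ s) (hak : a k = 0) :
    constantTerm (dysonProduct s a) = constantTerm (dysonProduct (s.erase k) a) := by
  rw [dysonProduct_eq_erase_mul hk hak]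
  refine constantTerm_mul_of_mem (k := k) ?_ ?_
  · refine Subring.prod_mem _ fun m hm => Subring.pow_mem _ ?_ _
    refine Subring.prod_mem _ fun i hi => Subring.sub_mem _ (Subring.one_mem _) ?_
    refine laurentMonomial_mem_polynomialIn (le_of_eq ?_)
    simp [Finset.ne_of_mem_erase (Finset.mem_of_mem_erase hi),
      (Finset.ne_of_mem_erase hm).symm]
  · refine Submonoid.prod_mem _ fun m hm => Submonoid.pow_mem _ ?_ _
    refine one_sub_laurentMonomial_mem_oneModVar (le_of_eq ?_)
    simp [(Finset.ne_of_mem_erase hm).symm]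

theorem constantTerm_dysonProduct (s : Finset (Fin N)) (a : Fin N → ℕ) :
    constantTerm (dysonProduct s a) = Nat.multinomial s a := by
  induction hn : ∑ i ∈ s, a i + #s using Nat.strong_induction_on generalizing s a with
  | _ n ih =>
  rcases s.eq_empty_or_nonempty with rfl | hs
  · simp [dysonProduct, constantTerm_one]
  by_cases hzero : ∃ k ∈ s, a k = 0
  · obtain ⟨k, hk, hak⟩ := hzero
    rw [constantTerm_dysonProduct_of_eq_zero hk hak, Nat.multinomial_erase_of_eq_zero hk hak]
    refine ih _ ?_ (s.erase k) a rfl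
    rw [← hn, Finset.sum_erase s hak, Finset.card_erase_of_mem hk]
    have := hs.card_pos
    omega
  · push Not at hzero
    rw [dysonProduct_eq_sum_update hs hzero, constantTerm_sum,
      Nat.multinomial_eq_sum_update hs hzero, Nat.cast_sum]
    refine Finset.sum_congr rfl fun k hk => ih _ ?_ s _ rfl
    rw [← hn, ← Finset.sum_update_sub_one_add_one hk (hzero k hk)]
    omega

/-- Dyson's constant term conjecture: the constant term of
`∏_{0 ≤ i ≠ j ≤ n} (1 - x_i/x_j)^{a_j}` is the multinomial coefficient
`(a_0 + ⋯ + a_n)!/(a_0! ⋯ a_n!)`. -/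
theorem dyson_constant_term (n : ℕ) (a : Fin (n + 1) → ℕ) :
    constantTerm
        (∏ p ∈ Finset.univ.offDiag,
          (1 - laurentMonomial (Pi.single p.1 1 - Pi.single p.2 1)) ^ (a p.2)) =
      (Nat.multinomial Finset.univ a : ℚ) := by
  rw [prod_offDiag_eq_dysonProduct]
  exact constantTerm_dysonProduct univ a
end

section
/- (Cauchy–Davenport over a field) Let F be a field and A_1, ..., A_n finite nonempty subsets of F with |A_j| = k_j. Then |{a_1 + ... + a_n : a_j ∈ A_j}| ≥ min{p(F), k_1 + ... + k_n − n + 1}. -/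
/-!
Induct on the number of summands, adding one set at a time with the Cauchy–Davenport theorem for
arbitrary abelian groups, `#(s + t) ≥ min (minOrder α) (#s + #t - 1)`. In a field every nonzero
element `a` has additive order `p(F)`, because `k • a = 0 ↔ (k : F) = 0`; hence the minimal order
of the additive group is `p(F)`, or `⊤` in characteristic zero.
-/

open Finset
open scoped Pointwise

namespace Finset

variable {ι α : Type*} [DecidableEq α]

theorem nonempty_sum [AddCommMonoid α] {s : Finset ι} {A : ι → Finset α}
    (hA : ∀ i ∈ s, (A i).Nonempty) : (∑ i ∈ s, A i).Nonempty := by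
  induction s using Finset.cons_induction with
  | empty => simp
  | cons i s _ ih =>
    rw [sum_cons]
    exact (hA i (mem_cons_self i s)).add (ih fun j hj => hA j (mem_cons_of_mem hj))

theorem image_piFinset_sum [AddCommMonoid α] [Fintype ι] [DecidableEq ι] (A : ι → Finset α) :
    (Fintype.piFinset A).image (fun f => ∑ i, f i) = ∑ i, A i := by
  apply coe_injective
  ext x
  rw [coe_sum, Set.mem_fintype_sum]
  simp

theorem cauchy_davenport_minOrder_sum [AddCommGroup α] {s : Finset ι} {A : ι → Finset α}
    (hA : ∀ i ∈ s, (A i).Nonempty) :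
    min (AddMonoid.minOrder α) ↑(∑ i ∈ s, (#(A i) - 1) + 1) ≤ #(∑ i ∈ s, A i) := by
  induction s using Finset.cons_induction with
  | empty => simp
  | cons i s _ ih =>
    have hs : ∀ j ∈ s, (A j).Nonempty := fun j hj => hA j (mem_cons_of_mem hj)
    have hAi : (A i).Nonempty := hA i (mem_cons_self i s)
    have shift (m : ℕ∞) (a b c : ℕ) (h : min m ↑b ≤ ↑c) : min m ↑(a + b) ≤ min m ↑(a + c) := by
      induction m using ENat.recTopCoe with
      | top => simpa using h
      | coe k =>
        simp only [min_le_iff, le_min_iff, Nat.cast_le] at h ⊢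
        omega
    rw [sum_cons, sum_cons]
    calc min (AddMonoid.minOrder α) ↑(#(A i) - 1 + ∑ j ∈ s, (#(A j) - 1) + 1)
        ≤ min (AddMonoid.minOrder α) ↑(#(A i) - 1 + #(∑ j ∈ s, A j)) := by
          rw [add_assoc]
          exact shift _ _ _ _ (ih hs)
      _ = min (AddMonoid.minOrder α) ↑(#(A i) + #(∑ j ∈ s, A j) - 1) := by
          have := hAi.card_pos
          congr 3
          omega
      _ ≤ #(A i + ∑ j ∈ s, A j) := cauchy_davenport_minOrder_add hAi (nonempty_sum hs)

end Finset

theorem addOrderOf_eq_ringChar {R : Type*} [Ring R] [NoZeroDivisors R] {a : R} (ha : a ≠ 0) :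
    addOrderOf a = ringChar R := by
  have := CharP.addOrderOf_one R
  rw [ringChar.eq R (addOrderOf (1 : R)), addOrderOf_eq_addOrderOf_iff]
  intro k
  simp [nsmul_eq_mul, ha]

namespace AddMonoid

variable {R : Type*} [Ring R] [NoZeroDivisors R]

theorem ringChar_le_minOrder : (ringChar R : ℕ∞) ≤ minOrder R :=
  le_minOrder.2 fun _ ha _ => by rw [addOrderOf_eq_ringChar ha]

theorem minOrder_eq_top_of_ringChar_eq_zero (h : ringChar R = 0) : minOrder R = ⊤ :=
  top_le_iff.1 <| le_minOrder.2 fun _ ha hfin =>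
    absurd ((addOrderOf_eq_ringChar ha).trans h) hfin.addOrderOf_pos.ne'

end AddMonoid

/-- Cauchy–Davenport over a field: the sumset of `A_1, …, A_n` has at least
`min{p(F), k_1 + ⋯ + k_n - n + 1}` elements; `ringChar F = 0` encodes `p(F)` infinite. -/
theorem cauchy_davenport_field {F : Type*} [Field F] [DecidableEq F] {n : ℕ}
    (A : Fin n → Finset F) (hA : ∀ j, (A j).Nonempty) :
    (ringChar F = 0 →
      (∑ j, ((A j).card : ℤ)) - n + 1 ≤
        ((Fintype.piFinset A).image fun f => ∑ i, f i).card) ∧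
    (ringChar F ≠ 0 →
      min ((ringChar F : ℤ)) ((∑ j, ((A j).card : ℤ)) - n + 1) ≤
        ((Fintype.piFinset A).image fun f => ∑ i, f i).card) := by
  have hCD := cauchy_davenport_minOrder_sum (s := univ) fun j _ => hA j
  have hbound : ((∑ j, (#(A j) - 1) + 1 : ℕ) : ℤ) = ∑ j, (#(A j) : ℤ) - n + 1 := by
    push_cast [Nat.cast_sub (hA _).card_pos]
    simp [sum_sub_distrib]
  rw [image_piFinset_sum, ← hbound]
  constructor
  · intro hchar
    rw [AddMonoid.minOrder_eq_top_of_ringChar_eq_zero hchar, min_eq_right le_top] at hCD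
    exact_mod_cast hCD
  · intro _
    have := (min_le_min_right _ AddMonoid.ringChar_le_minOrder).trans hCD
    simp only [min_le_iff, Nat.cast_le] at this ⊢
    exact_mod_cast this
end
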